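/- arXiv:2009.00732 — 4 statements merged into one kernel-verified Lean document; each statement's English description precedes it below -/
import Mathlib

section
/- Let G be a graph containing an escape path P = v_1, v_2, ..., v_n from v_1 to v_n (i.e., P is a path in G with deg_G(v_n) = 1 and deg_G(v_i) = 2 for all 2 ≤ i ≤ n-2). Then the function flip_P, which maps v_i to v_{n+1-i} and fixes all vertices outside P, sends every independent set of G containing v_1 to an independent set of G containing v_n. -/
open scoped Classical

variable {V : Type*}

/-- `P = p 1, p 2, …, p n` is an escape path in `G` (from `p 1` to `p n`):
a path in `G` whose last vertex `p n` has degree 1 and whose vertices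
`p i` for `2 ≤ i ≤ n - 2` have degree 2. -/
def IsEscapePath [Fintype V] (G : SimpleGraph V) (n : ℕ) (p : ℕ → V) : Prop :=
  1 ≤ n ∧ Set.InjOn p (Set.Icc 1 n) ∧
  (∀ i, 1 ≤ i → i < n → G.Adj (p i) (p (i + 1))) ∧
  G.degree (p n) = 1 ∧
  ∀ i, 2 ≤ i → i ≤ n - 2 → G.degree (p i) = 2

/-- The flip of the path `p 1, …, p n`: it maps `p i` to `p (n + 1 - i)` and
fixes every vertex outside the path. -/
noncomputable def flipP (n : ℕ) (p : ℕ → V) : V → V := fun x =>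
  if h : ∃ i, 1 ≤ i ∧ i ≤ n ∧ p i = x then p (n + 1 - h.choose) else x

/-- `s` is an independent set of `G`. -/
def IndepSet (G : SimpleGraph V) (s : Set V) : Prop :=
  ∀ x ∈ s, ∀ y ∈ s, x ≠ y → ¬ G.Adj x y

lemma flipP_apply {n : ℕ} {p : ℕ → V} (hinj : Set.InjOn p (Set.Icc 1 n))
    {a : ℕ} (ha1 : 1 ≤ a) (ha2 : a ≤ n) : flipP n p (p a) = p (n + 1 - a) := by
  have h : ∃ i, 1 ≤ i ∧ i ≤ n ∧ p i = p a := ⟨a, ha1, ha2, rfl⟩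
  have hc := h.choose_spec
  have hca : h.choose = a :=
    hinj (Set.mem_Icc.mpr ⟨hc.1, hc.2.1⟩) (Set.mem_Icc.mpr ⟨ha1, ha2⟩) hc.2.2
  show (if h : ∃ i, 1 ≤ i ∧ i ≤ n ∧ p i = p a then p (n + 1 - h.choose) else p a) = _
  rw [dif_pos h, hca]

lemma flipP_apply_off {n : ℕ} {p : ℕ → V} {x : V}
    (h : ¬ ∃ i, 1 ≤ i ∧ i ≤ n ∧ p i = x) : flipP n p x = x := by
  show (if h : ∃ i, 1 ≤ i ∧ i ≤ n ∧ p i = x then p (n + 1 - h.choose) else x) = x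
  rw [dif_neg h]

lemma nbr_of_deg_one [Fintype V] (G : SimpleGraph V) {v w : V} (hd : G.degree v = 1)
    (hw : G.Adj v w) {x : V} (hx : G.Adj v x) : x = w := by
  have h1 : (G.neighborFinset v).card ≤ 1 := le_of_eq hd
  exact Finset.card_le_one.mp h1 x (by rwa [SimpleGraph.mem_neighborFinset])
    w (by rwa [SimpleGraph.mem_neighborFinset])

lemma nbr_of_deg_two [Fintype V] (G : SimpleGraph V) {v w1 w2 : V} (hd : G.degree v = 2)
    (h1 : G.Adj v w1) (h2 : G.Adj v w2) (hne : w1 ≠ w2) {x : V} (hx : G.Adj v x) :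
    x = w1 ∨ x = w2 := by
  by_contra hc
  push_neg at hc
  have hsub : ({w1, w2, x} : Finset V) ⊆ G.neighborFinset v := by
    intro y hy
    rw [SimpleGraph.mem_neighborFinset]
    simp only [Finset.mem_insert, Finset.mem_singleton] at hy
    rcases hy with rfl | rfl | rfl
    · exact h1
    · exact h2
    · exact hx
  have hcard : ({w1, w2, x} : Finset V).card = 3 := by
    rw [Finset.card_insert_of_notMem (by simp [hne, hc.1.symm]),
      Finset.card_insert_of_notMem (by simp [hc.2.symm]), Finset.card_singleton]
  have hle := Finset.card_le_card hsub
  rw [hcard] at hle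
  have : G.degree v = (G.neighborFinset v).card := rfl
  omega

/-- Any edge out of a path vertex `p a` goes to a path neighbor, unless `a = 1`
or `a = n - 1`. -/
lemma escape_adj [Fintype V] {G : SimpleGraph V} {n : ℕ} {p : ℕ → V}
    (hp : IsEscapePath G n p) {a : ℕ} (ha1 : 1 ≤ a) (ha2 : a ≤ n) {x : V}
    (hadj : G.Adj (p a) x) :
    (∃ b, 1 ≤ b ∧ b ≤ n ∧ x = p b ∧ (b = a + 1 ∨ a = b + 1)) ∨ a = 1 ∨ a = n - 1 := by
  obtain ⟨hn, hinj, hpath, hdeg1, hdeg2⟩ := hp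
  by_cases hA1 : a = 1
  · exact Or.inr (Or.inl hA1)
  by_cases hAn1 : a = n - 1
  · exact Or.inr (Or.inr hAn1)
  left
  by_cases hAn : a = n
  · subst hAn
    have hn2 : 2 ≤ a := by omega
    have hprev : G.Adj (p (a - 1)) (p a) := by
      have := hpath (a - 1) (by omega) (by omega)
      rwa [show a - 1 + 1 = a by omega] at this
    have hx := nbr_of_deg_one G hdeg1 hprev.symm hadj
    exact ⟨a - 1, by omega, by omega, hx, Or.inr (by omega)⟩
  · have h2a : 2 ≤ a := by omega
    have han2 : a ≤ n - 2 := by omega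
    have hd := hdeg2 a h2a han2
    have hprev : G.Adj (p a) (p (a - 1)) := by
      have := hpath (a - 1) (by omega) (by omega)
      rw [show a - 1 + 1 = a by omega] at this
      exact this.symm
    have hnext : G.Adj (p a) (p (a + 1)) := hpath a ha1 (by omega)
    have hne : p (a - 1) ≠ p (a + 1) := by
      intro h
      have := hinj (Set.mem_Icc.mpr ⟨by omega, by omega⟩)
        (Set.mem_Icc.mpr ⟨by omega, by omega⟩) h
      omega
    rcases nbr_of_deg_two G hd hprev hnext hne hadj with h | h
    · exact ⟨a - 1, by omega, by omega, h, Or.inr (by omega)⟩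
    · exact ⟨a + 1, by omega, by omega, h, Or.inl rfl⟩

/-- if `P = p 1, …, p n` is an escape path in `G`, then `flipP`
sends every independent set of `G` containing `p 1` to an independent set of `G`
containing `p n`. -/
theorem flipP_maps_star_first_to_star_last [Fintype V] (G : SimpleGraph V)
    (n : ℕ) (p : ℕ → V) (hp : IsEscapePath G n p)
    (A : Set V) (hA : IndepSet G A) (h1 : p 1 ∈ A) :
    IndepSet G (flipP n p '' A) ∧ p n ∈ flipP n p '' A := by
  obtain ⟨hn, hinj, hpath, hdeg1, hdeg2⟩ := id hp
  -- no vertex `p 2` (with `n ≥ 2`) lies in `A`, since `p 1 ∈ A` and `p 1 ~ p 2`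
  have hA2 : ∀ a, 1 ≤ a → a ≤ n → p a ∈ A → a ≠ 2 := by
    intro a _ ha2 hmem ha
    subst ha
    have hadj : G.Adj (p 1) (p 2) := hpath 1 le_rfl (by omega)
    exact hA (p 1) h1 (p 2) hmem hadj.ne hadj
  -- the asymmetric half of the key claim: `u` lies on the path
  have keyhalf : ∀ u ∈ A, ∀ v ∈ A, u ≠ v →
      (∃ a, 1 ≤ a ∧ a ≤ n ∧ p a = u) → ¬ G.Adj (flipP n p u) (flipP n p v) := by
    rintro u hu v hv huv ⟨a, ha1, ha2, rfl⟩ hadj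
    rw [flipP_apply hinj ha1 ha2] at hadj
    by_cases hvon : ∃ b, 1 ≤ b ∧ b ≤ n ∧ p b = v
    · obtain ⟨b, hb1, hb2, rfl⟩ := hvon
      rw [flipP_apply hinj hb1 hb2] at hadj
      have hab : a ≠ b := fun h => huv (by rw [h])
      rcases escape_adj hp (by omega) (by omega) hadj with ⟨c, hc1, hc2, hx, hcc⟩ | hA1 | hAn1
      · have hcb : n + 1 - b = c :=
          hinj (Set.mem_Icc.mpr ⟨by omega, by omega⟩)
            (Set.mem_Icc.mpr ⟨hc1, hc2⟩) hx
        -- so `b = a + 1` or `a = b + 1`, contradicting independence of `A`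
        rcases hcc with h | h
        · have hba : a = b + 1 := by omega
          have : G.Adj (p b) (p a) := by
            have := hpath b hb1 (by omega)
            rwa [show b + 1 = a by omega] at this
          exact hA (p b) hv (p a) hu (fun h' => huv h'.symm) this
        · have hba : b = a + 1 := by omega
          have : G.Adj (p a) (p b) := by
            have := hpath a ha1 (by omega)
            rwa [show a + 1 = b by omega] at this
          exact hA (p a) hu (p b) hv huv this
      · -- `n + 1 - a = 1`, i.e. `a = n`; the edge starts at `p 1`
        have haa : a = n := by omega
        rw [show n + 1 - a = 1 by omega] at hadj
        rcases escape_adj hp (by omega) (by omega) hadj.symm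
          with ⟨c, hc1, hc2, hx, hcc⟩ | hB1 | hBn1
        · have hc1' : (1 : ℕ) = c :=
            hinj (Set.mem_Icc.mpr ⟨le_rfl, hn⟩) (Set.mem_Icc.mpr ⟨hc1, hc2⟩) hx
          have hbb : b = n - 1 := by omega
          have : G.Adj (p b) (p a) := by
            have := hpath b hb1 (by omega)
            rwa [show b + 1 = a by omega] at this
          exact hA (p b) hv (p a) hu (fun h' => huv h'.symm) this
        · exact hab (by omega)
        · exact hA2 b hb1 hb2 hv (by omega)
      · -- `n + 1 - a = n - 1`, i.e. `a = 2`, impossible since `p 2 ∉ A`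
        exact hA2 a ha1 ha2 hu (by omega)
    · -- `v` is off the path, so fixed by the flip
      rw [flipP_apply_off hvon] at hadj
      rcases escape_adj hp (by omega) (by omega) hadj with ⟨c, hc1, hc2, hx, _⟩ | hA1 | hAn1
      · exact hvon ⟨c, hc1, hc2, hx.symm⟩
      · rw [show n + 1 - a = 1 by omega] at hadj
        exact hA (p 1) h1 v hv (fun h => hvon ⟨1, le_rfl, hn, h⟩) hadj
      · exact hA2 a ha1 ha2 hu (by omega)
  have key : ∀ u ∈ A, ∀ v ∈ A, u ≠ v → ¬ G.Adj (flipP n p u) (flipP n p v) := by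
    intro u hu v hv huv hadj
    by_cases huon : ∃ a, 1 ≤ a ∧ a ≤ n ∧ p a = u
    · exact keyhalf u hu v hv huv huon hadj
    · by_cases hvon : ∃ b, 1 ≤ b ∧ b ≤ n ∧ p b = v
      · exact keyhalf v hv u hu huv.symm hvon hadj.symm
      · rw [flipP_apply_off huon, flipP_apply_off hvon] at hadj
        exact hA u hu v hv huv hadj
  constructor
  · rintro x ⟨u, hu, rfl⟩ y ⟨v, hv, rfl⟩ hxy hadj
    exact key u hu v hv (fun h => hxy (by rw [h])) hadj
  · refine ⟨p 1, h1, ?_⟩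
    rw [flipP_apply hinj le_rfl hn]
    congr 1
end

section
/- Let G be a graph with an escape path from v_1 to v_n. Then flip_P induces an injection from the family of independent sets of G containing v_1 into the family of independent sets of G containing v_n. -/
open scoped Classical

variable {V : Type*}

/-!
Since `flipP` is an involution, the induced map on sets is injective, and it sends `p 1` to `p n`.
For independence: a vertex `p c` with `2 ≤ c ≤ n`, `c ≠ n - 1` has only its path neighbours,
so the flip carries every edge at such a vertex to an edge. Any other edge `u ~ w` has an endpoint
`p (n - 1)`, which flips to the neighbour `p 2` of `p 1`, or joins `p 1` to a vertex off the path,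
which the flip fixes. So an edge between the flips of two vertices of `A` yields either an edge
inside `A` or an edge from `p 1 ∈ A` into `A`.
-/

open Finset

theorem SimpleGraph.mem_of_adj_of_subset_neighborFinset {G : SimpleGraph V} {v w : V}
    [Fintype (G.neighborSet v)] {s : Finset V} (hs : s ⊆ G.neighborFinset v)
    (hcard : G.degree v ≤ s.card) (h : G.Adj v w) : w ∈ s := by
  rw [eq_of_subset_of_card_le hs hcard]
  exact (G.mem_neighborFinset v w).mpr h

section Flip

variable {n : ℕ} {p : ℕ → V}

theorem flipP_apply_of_mem (hinj : Set.InjOn p (Set.Icc 1 n)) {i : ℕ} (h1 : 1 ≤ i)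
    (hin : i ≤ n) : flipP n p (p i) = p (n + 1 - i) := by
  have hex : ∃ j, 1 ≤ j ∧ j ≤ n ∧ p j = p i := ⟨i, h1, hin, rfl⟩
  obtain ⟨hc1, hcn, hc⟩ := hex.choose_spec
  rw [flipP, dif_pos hex, hinj ⟨hc1, hcn⟩ ⟨h1, hin⟩ hc]

theorem flipP_apply_of_forall_ne {x : V} (hx : ∀ i, 1 ≤ i → i ≤ n → p i ≠ x) :
    flipP n p x = x := by
  rw [flipP, dif_neg]
  rintro ⟨i, h1, hin, rfl⟩
  exact hx i h1 hin rfl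

theorem flipP_involutive (hinj : Set.InjOn p (Set.Icc 1 n)) : Function.Involutive (flipP n p) := by
  intro x
  by_cases hx : ∃ i, 1 ≤ i ∧ i ≤ n ∧ p i = x
  · obtain ⟨i, h1, hin, rfl⟩ := hx
    rw [flipP_apply_of_mem hinj h1 hin, flipP_apply_of_mem hinj (by omega) (by omega)]
    congr 1
    omega
  · push Not at hx
    rw [flipP_apply_of_forall_ne hx, flipP_apply_of_forall_ne hx]

theorem eq_one_or_flipP_eq_self (x : V)
    (hcore : ¬ ∃ c, 2 ≤ c ∧ c ≤ n ∧ c ≠ n - 1 ∧ p c = x) (hpred : ¬ (2 ≤ n ∧ p (n - 1) = x)) :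
    p 1 = x ∨ flipP n p x = x := by
  by_cases hx : ∃ i, 1 ≤ i ∧ i ≤ n ∧ p i = x
  · obtain ⟨i, h1, hin, rfl⟩ := hx
    by_cases hi : i = 1
    · exact Or.inl (by rw [hi])
    by_cases hi' : i = n - 1
    · exact absurd ⟨by omega, by rw [hi']⟩ hpred
    · exact absurd ⟨i, by omega, hin, hi', rfl⟩ hcore
  · push Not at hx
    exact Or.inr (flipP_apply_of_forall_ne hx)

end Flip

namespace IsEscapePath

variable [Fintype V] {G : SimpleGraph V} {n : ℕ} {p : ℕ → V}

theorem adj_of_consecutive (hp : IsEscapePath G n p) {a b : ℕ} (ha : 1 ≤ a) (hb : 1 ≤ b)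
    (han : a ≤ n) (hbn : b ≤ n) (hab : a + 1 = b ∨ b + 1 = a) : G.Adj (p a) (p b) := by
  rcases hab with rfl | rfl
  · exact hp.2.2.1 a ha (by omega)
  · exact (hp.2.2.1 b hb (by omega)).symm

theorem exists_index_succ_or_pred_of_adj (hp : IsEscapePath G n p) {c : ℕ} {w : V} (hc : 2 ≤ c) (hcn : c ≤ n)
    (hc' : c ≠ n - 1) (h : G.Adj (p c) w) :
    ∃ d, 1 ≤ d ∧ d ≤ n ∧ (d + 1 = c ∨ c + 1 = d) ∧ w = p d := by
  have ⟨_, hinj, _, hdeg1, hdeg2⟩ := hp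
  rcases eq_or_lt_of_le hcn with rfl | hlt
  · have hs : {p (c - 1)} ⊆ G.neighborFinset (p c) := by
      simpa using hp.adj_of_consecutive (a := c) (b := c - 1) (by omega) (by omega) le_rfl
        (by omega) (by omega)
    have hw := G.mem_of_adj_of_subset_neighborFinset hs (by simp [hdeg1]) h
    exact ⟨c - 1, by omega, by omega, by omega, mem_singleton.mp hw⟩
  · have hne : p (c - 1) ≠ p (c + 1) := fun he ↦ by
      have := hinj (x₁ := c - 1) ⟨by omega, by omega⟩ ⟨by omega, by omega⟩ he
      omega
    have hs : {p (c - 1), p (c + 1)} ⊆ G.neighborFinset (p c) := by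
      simp only [insert_subset_iff, singleton_subset_iff, SimpleGraph.mem_neighborFinset]
      exact ⟨hp.adj_of_consecutive (by omega) (by omega) hcn (by omega) (by omega),
        hp.adj_of_consecutive (by omega) (by omega) hcn (by omega) (by omega)⟩
    have hw := G.mem_of_adj_of_subset_neighborFinset hs
      (by rw [card_pair hne, hdeg2 c hc (by omega)]) h
    rcases mem_insert.mp hw with hw | hw
    · exact ⟨c - 1, by omega, by omega, by omega, hw⟩
    · exact ⟨c + 1, by omega, by omega, by omega, mem_singleton.mp hw⟩

theorem adj_flipP_of_adj (hp : IsEscapePath G n p) {c : ℕ} {w : V} (hc : 2 ≤ c) (hcn : c ≤ n)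
    (hc' : c ≠ n - 1) (h : G.Adj (p c) w) : G.Adj (flipP n p (p c)) (flipP n p w) := by
  obtain ⟨d, hd, hdn, hcd, rfl⟩ := hp.exists_index_succ_or_pred_of_adj hc hcn hc' h
  rw [flipP_apply_of_mem hp.2.1 (by omega) hcn, flipP_apply_of_mem hp.2.1 hd hdn]
  exact hp.adj_of_consecutive (by omega) (by omega) (by omega) (by omega) (by omega)

theorem adj_one_flipP_pred (hp : IsEscapePath G n p) (hn : 2 ≤ n) :
    G.Adj (p 1) (flipP n p (p (n - 1))) := by
  rw [flipP_apply_of_mem hp.2.1 (by omega) (by omega)]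
  exact hp.adj_of_consecutive le_rfl (by omega) (by omega) (by omega) (by omega)

theorem adj_flipP_or (hp : IsEscapePath G n p) {u w : V} (h : G.Adj u w) :
    G.Adj (flipP n p u) (flipP n p w) ∨ G.Adj (p 1) (flipP n p u) ∨
      G.Adj (p 1) (flipP n p w) := by
  by_cases hu : ∃ c, 2 ≤ c ∧ c ≤ n ∧ c ≠ n - 1 ∧ p c = u
  · obtain ⟨c, hc, hcn, hc', rfl⟩ := hu
    exact Or.inl (hp.adj_flipP_of_adj hc hcn hc' h)
  by_cases hw : ∃ c, 2 ≤ c ∧ c ≤ n ∧ c ≠ n - 1 ∧ p c = w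
  · obtain ⟨c, hc, hcn, hc', rfl⟩ := hw
    exact Or.inl (hp.adj_flipP_of_adj hc hcn hc' h.symm).symm
  by_cases hu' : 2 ≤ n ∧ p (n - 1) = u
  · obtain ⟨hn, rfl⟩ := hu'
    exact Or.inr (Or.inl (hp.adj_one_flipP_pred hn))
  by_cases hw' : 2 ≤ n ∧ p (n - 1) = w
  · obtain ⟨hn, rfl⟩ := hw'
    exact Or.inr (Or.inr (hp.adj_one_flipP_pred hn))
  rcases eq_one_or_flipP_eq_self u hu hu' with rfl | hfu <;>
    rcases eq_one_or_flipP_eq_self w hw hw' with rfl | hfw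
  · exact absurd h (G.loopless.irrefl _)
  · exact Or.inr (Or.inr (by rwa [hfw]))
  · exact Or.inr (Or.inl (by rw [hfu]; exact h.symm))
  · exact Or.inl (by rwa [hfu, hfw])

theorem indepSet_image_flipP (hp : IsEscapePath G n p) {A : Set V} (hA : IndepSet G A)
    (h1 : p 1 ∈ A) : IndepSet G (flipP n p '' A) := by
  rintro _ ⟨x, hx, rfl⟩ _ ⟨y, hy, rfl⟩ hxy hadj
  have hinv := flipP_involutive hp.2.1
  have hA' : ∀ z ∈ A, ¬ G.Adj (p 1) z := fun z hz hz' ↦ hA _ h1 _ hz hz'.ne hz'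
  rcases hp.adj_flipP_or hadj with h | h | h
  · rw [hinv x, hinv y] at h
    exact hA x hx y hy (fun he ↦ hxy (congrArg _ he)) h
  · exact hA' x hx (hinv x ▸ h)
  · exact hA' y hy (hinv y ▸ h)

end IsEscapePath

/-- if `P = p 1, …, p n` is an escape path in `G`, then `flipP`
(acting elementwise on sets) is an injection from the family of independent sets
of `G` containing `p 1` into the family of independent sets of `G` containing `p n`. -/
theorem flipP_injOn_star [Fintype V] (G : SimpleGraph V)
    (n : ℕ) (p : ℕ → V) (hp : IsEscapePath G n p) :
    Set.MapsTo (fun A : Set V => flipP n p '' A)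
        {A : Set V | IndepSet G A ∧ p 1 ∈ A}
        {A : Set V | IndepSet G A ∧ p n ∈ A} ∧
      Set.InjOn (fun A : Set V => flipP n p '' A)
        {A : Set V | IndepSet G A ∧ p 1 ∈ A} := by
  refine ⟨fun A ⟨hA, h1⟩ ↦ ⟨hp.indepSet_image_flipP hA h1, p 1, h1, ?_⟩,
    fun A _ B _ h ↦ Set.image_injective.mpr (flipP_involutive hp.2.1).injective h⟩
  rw [flipP_apply_of_mem hp.2.1 le_rfl hp.1, Nat.add_sub_cancel]
end

section
/- Let L be a lobster, C the caterpillar obtained by removing the leaves of L, and P the path obtained by removing the leaves of C (vertices of P are called spinal vertices). If v is a vertex of L that is either not a spinal vertex or has degree different from 2 in L, then for every k ≥ 1 there exists a leaf ℓ of L with |I^k_L(v)| ≤ |I^k_L(ℓ)|. -/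
/-!
A vertex `ℓ ≠ v` whose neighbourhood lies in the closed neighbourhood of `v` has a star at least
as large as that of `v`: exchanging `v` for `ℓ` maps the independent `k`-sets through `v` but not
`ℓ` injectively to independent `k`-sets through `ℓ`. A leaf at distance one or two from `v` is of
this kind. If no leaf lies within distance two of `v`, the two rounds of leaf deletion do not
change the degree of `v`, so `v` is a vertex of the spine path with its full degree, which is
therefore two.
-/

open scoped Classical

variable {V : Type*}

/-- The star `I^k_G(u)`: the family of independent `k`-subsets of `G`
containing the vertex `u`. -/
noncomputable def star [Fintype V] (G : SimpleGraph V) (k : ℕ) (u : V) :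
    Finset (Finset V) :=
  Finset.univ.filter
    (fun A : Finset V => A.card = k ∧ u ∈ A ∧
      ∀ x ∈ A, ∀ y ∈ A, x ≠ y → ¬ G.Adj x y)

/-- A caterpillar: a finite tree (on at least two vertices) such that deleting all
leaves (vertices of degree 1) and their incident edges yields a path graph. -/
def IsCaterpillar [Fintype V] (G : SimpleGraph V) : Prop :=
  G.IsTree ∧ 2 ≤ Fintype.card V ∧
    ∃ m : ℕ,
      Nonempty ((G.induce {v : V | G.degree v ≠ 1}) ≃g SimpleGraph.pathGraph m)

/-- `innerGraph G`: the graph obtained from `G` by removing its leaves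
(the induced subgraph on the non-leaf vertices). -/
abbrev innerGraph [Fintype V] (G : SimpleGraph V) :
    SimpleGraph {v : V | G.degree v ≠ 1} :=
  G.induce {v : V | G.degree v ≠ 1}

/-- A lobster: a finite tree such that removing all leaves yields a caterpillar. -/
def IsLobster [Fintype V] (G : SimpleGraph V) : Prop :=
  G.IsTree ∧ 2 ≤ Fintype.card V ∧ IsCaterpillar (innerGraph G)

/-- A spinal vertex of `G`: a vertex of the path obtained by removing the leaves
of `G` twice, i.e. a non-leaf of `G` that is also a non-leaf of `innerGraph G`. -/
def IsSpinal [Fintype V] (G : SimpleGraph V) (v : V) : Prop :=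
  ∃ h : G.degree v ≠ 1, (innerGraph G).degree ⟨v, h⟩ ≠ 1

open Finset SimpleGraph

section Stars

variable [Fintype V] {G : SimpleGraph V} {k : ℕ}

theorem mem_star_iff {u : V} {A : Finset V} :
    A ∈ star G k u ↔ #A = k ∧ u ∈ A ∧ G.IsIndepSet (A : Set V) := by
  simp [_root_.star, isIndepSet_iff, Set.Pairwise]

theorem insert_erase_mem_star {v ℓ : V} (hN : G.neighborSet ℓ ⊆ insert v (G.neighborSet v))
    {A : Finset V} (hA : A ∈ star G k v) (hℓA : ℓ ∉ A) :
    insert ℓ (A.erase v) ∈ star G k ℓ := by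
  obtain ⟨hcard, hvA, hind⟩ := mem_star_iff.1 hA
  refine mem_star_iff.2 ⟨?_, mem_insert_self _ _, ?_⟩
  · rw [card_insert_of_notMem (fun h => hℓA (mem_of_mem_erase h)), card_erase_add_one hvA, hcard]
  · rw [coe_insert, IsIndepSet, Set.pairwise_insert]
    refine ⟨hind.mono (by simp), fun x hx _ => ?_⟩
    suffices ¬ G.Adj ℓ x from ⟨this, fun h => this h.symm⟩
    intro hℓx
    obtain ⟨hxv, hxA⟩ := mem_erase.1 hx
    rcases hN hℓx with rfl | hvx
    · exact hxv rfl
    · exact hind hvA hxA hxv.symm hvx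

theorem card_star_le_card_star_of_neighborSet_subset {v ℓ : V} (hvℓ : v ≠ ℓ)
    (hN : G.neighborSet ℓ ⊆ insert v (G.neighborSet v)) :
    #(star G k v) ≤ #(star G k ℓ) := by
  let f : Finset V → Finset V := fun A => if ℓ ∈ A then A else insert ℓ (A.erase v)
  let g : Finset V → Finset V := fun B => if v ∈ B then B else insert v (B.erase ℓ)
  refine card_le_card_of_injOn f (fun A hA => ?_) (Set.LeftInvOn.injOn (f₁' := g) fun A hA => ?_)
  · by_cases hℓA : ℓ ∈ A
    · obtain ⟨hcard, -, hind⟩ := mem_star_iff.1 hA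
      simpa only [f, if_pos hℓA, mem_coe] using mem_star_iff.2 ⟨hcard, hℓA, hind⟩
    · simpa only [f, if_neg hℓA, mem_coe] using insert_erase_mem_star hN hA hℓA
  · have hvA : v ∈ A := (mem_star_iff.1 hA).2.1
    by_cases hℓA : ℓ ∈ A
    · simp only [f, g, if_pos hℓA, if_pos hvA]
    · have hv : v ∉ insert ℓ (A.erase v) := by simp [hvℓ]
      simp only [f, g, if_neg hℓA, if_neg hv,
        erase_insert (fun h => hℓA (mem_of_mem_erase h)), insert_erase hvA]

end Stars

theorem neighborSet_eq_singleton_of_degree_eq_one {G : SimpleGraph V} {ℓ u : V}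
    [Fintype (G.neighborSet ℓ)] (hℓ : G.degree ℓ = 1) (hu : G.Adj ℓ u) :
    G.neighborSet ℓ = {u} := by
  obtain ⟨w, -, hw⟩ := degree_eq_one_iff_existsUnique_adj.1 hℓ
  ext x
  simp only [mem_neighborSet, Set.mem_singleton_iff]
  exact ⟨fun hx => (hw x hx).trans (hw u hu).symm, fun hx => hx ▸ hu⟩

theorem pathGraph_degree_le_two {n : ℕ} (x : Fin n) [Fintype ((pathGraph n).neighborSet x)] :
    (pathGraph n).degree x ≤ 2 := by
  rw [← card_neighborFinset_eq_degree]
  calc #((pathGraph n).neighborFinset x) ≤ #({x.val + 1, x.val - 1} : Finset ℕ) :=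
        card_le_card_of_injOn Fin.val (fun y hy => ?_) Fin.val_injective.injOn
    _ ≤ 2 := card_le_two
  simp only [coe_neighborFinset, mem_neighborSet, pathGraph_adj] at hy
  simp only [coe_insert, coe_singleton, Set.mem_insert_iff, Set.mem_singleton_iff]
  omega

theorem degree_innerGraph [Fintype V] {G : SimpleGraph V} {v : V} (hv : G.degree v ≠ 1)
    (hN : ∀ w, G.Adj v w → G.degree w ≠ 1) :
    (innerGraph G).degree ⟨v, hv⟩ = G.degree v :=
  degree_induce_of_neighborSet_subset fun w hw => hN w hw

theorem IsCaterpillar.degree_le_two [Fintype V] {G : SimpleGraph V} (hG : IsCaterpillar G)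
    {v : V} (hv : G.degree v ≠ 1) (hN : ∀ w, G.Adj v w → G.degree w ≠ 1) :
    G.degree v ≤ 2 := by
  obtain ⟨-, -, m, ⟨f⟩⟩ := hG
  rw [← degree_innerGraph hv hN, ← f.degree_eq]
  exact pathGraph_degree_le_two _

theorem IsLobster.isSpinal_and_degree_eq_two [Fintype V] {G : SimpleGraph V} (hG : IsLobster G)
    {v : V} (hv : G.degree v ≠ 1) (hN : ∀ u, G.Adj v u → G.degree u ≠ 1)
    (hN₂ : ∀ u w, G.Adj v u → G.Adj u w → G.degree w ≠ 1) :
    IsSpinal G v ∧ G.degree v = 2 := by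
  obtain ⟨htree, hcard, hcat⟩ := hG
  have hinner : (innerGraph G).degree ⟨v, hv⟩ ≠ 1 := by rwa [degree_innerGraph hv hN]
  have hle : G.degree v ≤ 2 := by
    rw [← degree_innerGraph hv hN]
    refine hcat.degree_le_two hinner fun u hvu => ?_
    exact (degree_innerGraph u.2 fun w => hN₂ u w hvu).trans_ne u.2
  have : Nontrivial V := Fintype.one_lt_card_iff_nontrivial.1 hcard
  have hpos := htree.connected.preconnected.degree_pos_of_nontrivial v
  exact ⟨⟨hv, hinner⟩, by omega⟩

theorem lobster_star_le_leaf_star_general [Fintype V] (G : SimpleGraph V)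
    (hG : IsLobster G) (v : V) (hv : ¬ IsSpinal G v ∨ G.degree v ≠ 2)
    (k : ℕ) :
    ∃ ℓ : V, G.degree ℓ = 1 ∧ (star G k v).card ≤ (star G k ℓ).card := by
  by_cases hv₁ : G.degree v = 1
  · exact ⟨v, hv₁, le_rfl⟩
  by_cases hN : ∃ ℓ, G.Adj v ℓ ∧ G.degree ℓ = 1
  · obtain ⟨ℓ, hvℓ, hℓ⟩ := hN
    refine ⟨ℓ, hℓ, card_star_le_card_star_of_neighborSet_subset hvℓ.ne ?_⟩
    simp [neighborSet_eq_singleton_of_degree_eq_one hℓ hvℓ.symm]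
  by_cases hN₂ : ∃ u ℓ, G.Adj v u ∧ G.Adj u ℓ ∧ G.degree ℓ = 1
  · obtain ⟨u, ℓ, hvu, huℓ, hℓ⟩ := hN₂
    refine ⟨ℓ, hℓ, card_star_le_card_star_of_neighborSet_subset (by rintro rfl; exact hv₁ hℓ) ?_⟩
    simp [neighborSet_eq_singleton_of_degree_eq_one hℓ huℓ.symm, hvu]
  push Not at hN hN₂
  obtain ⟨hspinal, hdeg⟩ := hG.isSpinal_and_degree_eq_two hv₁ hN hN₂
  exact hv.elim (absurd hspinal) (absurd hdeg)

/-- in a lobster `L`, if `v` is not a spinal vertex or has degree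
different from 2, then for every `k ≥ 1` there is a leaf `ℓ` with
`|I^k_L(v)| ≤ |I^k_L(ℓ)|`. -/
theorem lobster_star_le_leaf_star [Fintype V] (G : SimpleGraph V)
    (hG : IsLobster G) (v : V) (hv : ¬ IsSpinal G v ∨ G.degree v ≠ 2)
    (k : ℕ) (hk : 1 ≤ k) :
    ∃ ℓ : V, G.degree ℓ = 1 ∧ (star G k v).card ≤ (star G k ℓ).card :=
  lobster_star_le_leaf_star_general G hG v hv k
end

section
/- Let L be a lobster with spine path P (obtained by twice removing leaves). If v is a spinal vertex with deg_L(v) ≥ 3, then v has an escape path in L to a leaf. -/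
open scoped Classical

variable {V : Type*}

/-- in a lobster, every spinal vertex of degree at least 3 has an
escape path to a leaf. -/
theorem lobster_spinal_highDegree_escapePath [Fintype V] (G : SimpleGraph V)
    (hG : IsLobster G) (v : V) (hs : IsSpinal G v) (hd : 3 ≤ G.degree v) :
    ∃ (n : ℕ) (p : ℕ → V) (ℓ : V), G.degree ℓ = 1 ∧
      IsEscapePath G n p ∧ p 1 = v ∧ p n = ℓ := by
  classical
  obtain ⟨hv1, hv2⟩ := hs
  by_cases hA : ∃ w, G.Adj v w ∧ G.degree w = 1
  · obtain ⟨w, hvw, hw1⟩ := hA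
    refine ⟨2, fun i => if i = 1 then v else w, w, hw1, ⟨by norm_num, ?_, ?_, by simpa using hw1, ?_⟩, by simp, by simp⟩
    · intro a ha b hb hab
      simp only [Set.mem_Icc] at ha hb
      have hne := hvw.ne
      obtain ⟨ha1, ha2⟩ := ha
      obtain ⟨hb1, hb2⟩ := hb
      interval_cases a <;> interval_cases b <;> simp_all
    · intro i h1 h2
      have : i = 1 := by omega
      subst this
      simpa using hvw
    · intro i h1 h2; omega
  · push_neg at hA
    have hB : ∃ w : {x : V | G.degree x ≠ 1},
        (innerGraph G).Adj ⟨v, hv1⟩ w ∧ (innerGraph G).degree w = 1 := by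
      by_contra hC
      push_neg at hC
      obtain ⟨hT, hc, m, ⟨e⟩⟩ := hG.2.2
      have h3 : 2 < (G.neighborFinset v).card := by
        rwa [SimpleGraph.card_neighborFinset_eq_degree]
      obtain ⟨a, b, c, ha, hb, hc', hab, hac, hbc⟩ := Finset.two_lt_card_iff.mp h3
      rw [SimpleGraph.mem_neighborFinset] at ha hb hc'
      have haL : G.degree a ≠ 1 := hA a ha
      have hbL : G.degree b ≠ 1 := hA b hb
      have hcL : G.degree c ≠ 1 := hA c hc'
      have hadja : (innerGraph G).Adj ⟨v, hv1⟩ ⟨a, haL⟩ := ha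
      have hadjb : (innerGraph G).Adj ⟨v, hv1⟩ ⟨b, hbL⟩ := hb
      have hadjc : (innerGraph G).Adj ⟨v, hv1⟩ ⟨c, hcL⟩ := hc'
      have hIa := hC ⟨a, haL⟩ hadja
      have hIb := hC ⟨b, hbL⟩ hadjb
      have hIc := hC ⟨c, hcL⟩ hadjc
      set S : Set {x : V | G.degree x ≠ 1} := {u | (innerGraph G).degree u ≠ 1} with hS
      have hVm : (⟨⟨v, hv1⟩, hv2⟩ : S) ∈ Set.univ := Set.mem_univ _
      set V0 : S := ⟨⟨v, hv1⟩, hv2⟩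
      set A : S := ⟨⟨a, haL⟩, hIa⟩
      set B : S := ⟨⟨b, hbL⟩, hIb⟩
      set C : S := ⟨⟨c, hcL⟩, hIc⟩
      have hA' : (SimpleGraph.pathGraph m).Adj (e V0) (e A) := e.map_adj_iff.mpr hadja
      have hB' : (SimpleGraph.pathGraph m).Adj (e V0) (e B) := e.map_adj_iff.mpr hadjb
      have hC' : (SimpleGraph.pathGraph m).Adj (e V0) (e C) := e.map_adj_iff.mpr hadjc
      rw [SimpleGraph.pathGraph_adj] at hA' hB' hC'
      have hAB : e A ≠ e B := by
        intro h
        exact hab (Subtype.ext_iff.mp (Subtype.ext_iff.mp (e.toEquiv.injective h)))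
      have hAC : e A ≠ e C := by
        intro h
        exact hac (Subtype.ext_iff.mp (Subtype.ext_iff.mp (e.toEquiv.injective h)))
      have hBC : e B ≠ e C := by
        intro h
        exact hbc (Subtype.ext_iff.mp (Subtype.ext_iff.mp (e.toEquiv.injective h)))
      have h1 : ((e A : Fin m) : ℕ) ≠ ((e B : Fin m) : ℕ) := fun h => hAB (Fin.val_injective h)
      have h2 : ((e A : Fin m) : ℕ) ≠ ((e C : Fin m) : ℕ) := fun h => hAC (Fin.val_injective h)
      have h3' : ((e B : Fin m) : ℕ) ≠ ((e C : Fin m) : ℕ) := fun h => hBC (Fin.val_injective h)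
      omega
    obtain ⟨w, hadj, hdeg1⟩ := hB
    have hvw : G.Adj v (w : V) := hadj
    have hdw : 2 ≤ G.degree (w : V) := by
      have h0 : 0 < G.degree (w : V) := by
        rw [← SimpleGraph.card_neighborFinset_eq_degree]
        exact Finset.card_pos.mpr ⟨v, (SimpleGraph.mem_neighborFinset _ _ _).mpr hvw.symm⟩
      have := w.2
      simp only [Set.mem_setOf_eq] at this
      omega
    have h1lt : 1 < (G.neighborFinset (w : V)).card := by
      rwa [SimpleGraph.card_neighborFinset_eq_degree]
    obtain ⟨ℓ, hℓmem, hℓv⟩ := Finset.exists_mem_ne h1lt v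
    rw [SimpleGraph.mem_neighborFinset] at hℓmem
    have hℓ1 : G.degree ℓ = 1 := by
      by_contra hl
      have hadjv : (innerGraph G).Adj w ⟨v, hv1⟩ := hvw.symm
      have hadjl : (innerGraph G).Adj w ⟨ℓ, hl⟩ := hℓmem
      have : 1 < (innerGraph G).degree w := by
        rw [← SimpleGraph.card_neighborFinset_eq_degree]
        refine Finset.one_lt_card.mpr ⟨⟨v, hv1⟩, ?_, ⟨ℓ, hl⟩, ?_, ?_⟩
        · exact (SimpleGraph.mem_neighborFinset _ _ _).mpr hadjv
        · exact (SimpleGraph.mem_neighborFinset _ _ _).mpr hadjl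
        · intro h
          exact hℓv (by injection h.symm)
      omega
    have hvℓ : v ≠ ℓ := by
      intro h; rw [h] at hd; omega
    have hwv : (w : V) ≠ v := hvw.ne'
    have hwℓ : (w : V) ≠ ℓ := hℓmem.ne
    refine ⟨3, fun i => if i = 1 then v else if i = 2 then (w : V) else ℓ, ℓ, hℓ1,
      ⟨by norm_num, ?_, ?_, by simpa using hℓ1, ?_⟩, by simp, by simp⟩
    · intro x hx y hy hxy
      simp only [Set.mem_Icc] at hx hy
      obtain ⟨hx1, hx2⟩ := hx
      obtain ⟨hy1, hy2⟩ := hy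
      interval_cases x <;> interval_cases y <;> simp_all
    · intro i h1 h2
      interval_cases i
      · simpa using hvw
      · simpa using hℓmem
    · intro i h1 h2; omega
end
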